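/- arXiv:1505.00341 — 11 statements merged into one kernel-verified Lean document; each statement's English description precedes it below -/
import Mathlib

section
/- Let P be a dichotomous profile in which every candidate is approved in at least one vote and disapproved in at least one vote. If P satisfies WSC, then P satisfies CEI. -/
open Finset Function

variable {C : Type*} [Fintype C] [DecidableEq C]

/-- All voters satisfying `S` come strictly before all voters satisfying `T`. -/
def Before {n : ℕ} (σ : Fin n → ℝ) (S T : Fin n → Prop) : Prop :=
  ∀ i j, S i → T j → σ i < σ j

/-- The voter ordering induced by `σ` witnesses VEI: for every candidate,
the set of approving voters is a prefix or a suffix. -/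
def IsVEIOrder {n : ℕ} (P : Fin n → Finset C) (σ : Fin n → ℝ) : Prop :=
  ∀ c : C, (∃ t : ℝ, ∀ i, c ∈ P i ↔ σ i ≤ t) ∨ (∃ t : ℝ, ∀ i, c ∈ P i ↔ t ≤ σ i)

/-- Voter Extremal Interval. -/
def VEI {n : ℕ} (P : Fin n → Finset C) : Prop :=
  ∃ σ : Fin n → ℝ, Injective σ ∧ IsVEIOrder P σ

/-- The candidate ordering induced by `pos` witnesses CEI: every vote is a
prefix or a suffix of the candidate ordering. -/
def IsCEIOrder {n : ℕ} (P : Fin n → Finset C) (pos : C → ℝ) : Prop :=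
  ∀ i, (∃ t : ℝ, ∀ c : C, c ∈ P i ↔ pos c ≤ t) ∨ (∃ t : ℝ, ∀ c : C, c ∈ P i ↔ t ≤ pos c)

/-- Candidate Extremal Interval. -/
def CEI {n : ℕ} (P : Fin n → Finset C) : Prop :=
  ∃ pos : C → ℝ, Injective pos ∧ IsCEIOrder P pos

/-- Voter Interval: voters can be ordered so that the approvers of each
candidate form a contiguous interval. -/
def VI {n : ℕ} (P : Fin n → Finset C) : Prop :=
  ∃ σ : Fin n → ℝ, Injective σ ∧
    ∀ c : C, ∃ lo hi : ℝ, ∀ i, c ∈ P i ↔ lo ≤ σ i ∧ σ i ≤ hi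

/-- Candidate Interval: candidates can be ordered so that every vote forms a
contiguous interval. -/
def CI {n : ℕ} (P : Fin n → Finset C) : Prop :=
  ∃ pos : C → ℝ, Injective pos ∧
    ∀ i, ∃ lo hi : ℝ, ∀ c : C, c ∈ P i ↔ lo ≤ pos c ∧ pos c ≤ hi

/-- Dichotomous Uniformly Euclidean. -/
def DUE {n : ℕ} (P : Fin n → Finset C) : Prop :=
  ∃ (ρv : Fin n → ℝ) (ρc : C → ℝ) (r : ℝ), 0 ≤ r ∧
    ∀ i, ∀ c : C, c ∈ P i ↔ |ρv i - ρc c| ≤ r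

/-- Dichotomous Euclidean (individual radii). -/
def DE {n : ℕ} (P : Fin n → Finset C) : Prop :=
  ∃ (ρv : Fin n → ℝ) (ρc : C → ℝ) (r : Fin n → ℝ), (∀ i, 0 ≤ r i) ∧
    ∀ i, ∀ c : C, c ∈ P i ↔ |ρv i - ρc c| ≤ r i

/-- Weakly single-crossing: voters can be ordered so that for each pair of
candidates `a, b`, the votes approving `a` but not `b`, the remaining votes,
and the votes approving `b` but not `a` appear as three consecutive blocks
(in this or the reverse order). -/
def WSC {n : ℕ} (P : Fin n → Finset C) : Prop :=
  ∃ σ : Fin n → ℝ, Injective σ ∧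
    ∀ a b : C,
      (Before σ (fun i => a ∈ P i ∧ b ∉ P i)
         (fun i => ¬(a ∈ P i ∧ b ∉ P i) ∧ ¬(b ∈ P i ∧ a ∉ P i)) ∧
       Before σ (fun i => ¬(a ∈ P i ∧ b ∉ P i) ∧ ¬(b ∈ P i ∧ a ∉ P i))
         (fun i => b ∈ P i ∧ a ∉ P i) ∧
       Before σ (fun i => a ∈ P i ∧ b ∉ P i) (fun i => b ∈ P i ∧ a ∉ P i)) ∨
      (Before σ (fun i => b ∈ P i ∧ a ∉ P i)
         (fun i => ¬(a ∈ P i ∧ b ∉ P i) ∧ ¬(b ∈ P i ∧ a ∉ P i)) ∧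
       Before σ (fun i => ¬(a ∈ P i ∧ b ∉ P i) ∧ ¬(b ∈ P i ∧ a ∉ P i))
         (fun i => a ∈ P i ∧ b ∉ P i) ∧
       Before σ (fun i => b ∈ P i ∧ a ∉ P i) (fun i => a ∈ P i ∧ b ∉ P i))

/-- Seemingly single-crossing. -/
def SSC {n : ℕ} (P : Fin n → Finset C) : Prop :=
  ∃ σ : Fin n → ℝ, Injective σ ∧
    ∀ a b : C,
      Before σ (fun i => a ∈ P i ∧ b ∉ P i) (fun i => b ∈ P i ∧ a ∉ P i) ∨
      Before σ (fun i => b ∈ P i ∧ a ∉ P i) (fun i => a ∈ P i ∧ b ∉ P i)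

/-- 2-partition profile: exactly two distinct votes occur, and they
partition the candidate set. -/
def TwoPart {n : ℕ} (P : Fin n → Finset C) : Prop :=
  ∃ v v' : Finset C, v ≠ v' ∧ v ∩ v' = ∅ ∧ v ∪ v' = Finset.univ ∧
    (∀ i, P i = v ∨ P i = v') ∧ (∃ i, P i = v) ∧ (∃ i, P i = v')

/-- Partition profile: the distinct votes are nonempty, pairwise disjoint,
and cover the candidate set. -/
def PartitionProfile {n : ℕ} (P : Fin n → Finset C) : Prop :=
  (∀ i, (P i).Nonempty) ∧ (∀ c : C, ∃ i, c ∈ P i) ∧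
  (∀ i j, P i = P j ∨ Disjoint (P i) (P j))

/-- The linear order given by ranking function `r` (higher is better)
refines the approval vote `v`. -/
def Refines (r : C → ℝ) (v : Finset C) : Prop :=
  ∀ a b : C, a ∈ v → b ∉ v → r b < r a

/-- The linear order given by `r` is single-peaked with respect to the axis
given by `pos`. -/
def SinglePeakedWrt (pos r : C → ℝ) : Prop :=
  ∀ a b c : C, ((pos a < pos b ∧ pos b < pos c) ∨ (pos c < pos b ∧ pos b < pos a)) →
    r b < r a → r c < r b

/-- The profile of linear orders given by the ranking functions `rank i` is
single-crossing: voters can be ordered so that for each pair of candidates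
the set of voters preferring one to the other is a prefix. -/
def SingleCrossing {n : ℕ} (rank : Fin n → C → ℝ) : Prop :=
  ∃ σ : Fin n → ℝ, Injective σ ∧
    ∀ a b : C, ∀ i j, σ j < σ i → rank i b < rank i a → rank j b < rank j a

/-- The profile of linear orders given by `rank` is 1-Euclidean with respect
to the embedding `ρv` of voters and `ρc` of candidates. -/
def IsEuclidean {n : ℕ} (rank : Fin n → C → ℝ) (ρv : Fin n → ℝ) (ρc : C → ℝ) : Prop :=
  ∀ i, ∀ a b : C, rank i b < rank i a ↔ |ρv i - ρc a| < |ρv i - ρc b|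

/-- Possibly single-peaked. -/
def PSP {n : ℕ} (P : Fin n → Finset C) : Prop :=
  ∃ (rank : Fin n → C → ℝ) (pos : C → ℝ), Injective pos ∧
    (∀ i, Injective (rank i)) ∧ (∀ i, Refines (rank i) (P i)) ∧
    (∀ i, SinglePeakedWrt pos (rank i))

/-- Possibly single-crossing. -/
def PSC {n : ℕ} (P : Fin n → Finset C) : Prop :=
  ∃ rank : Fin n → C → ℝ, (∀ i, Injective (rank i)) ∧
    (∀ i, Refines (rank i) (P i)) ∧ SingleCrossing rank

/-- Possibly Euclidean. -/
def PE {n : ℕ} (P : Fin n → Finset C) : Prop :=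
  ∃ (rank : Fin n → C → ℝ) (ρv : Fin n → ℝ) (ρc : C → ℝ),
    (∀ i, Injective (rank i)) ∧ (∀ i, Refines (rank i) (P i)) ∧
    IsEuclidean rank ρv ρc

/-- Two approval votes induce the same dichotomous weak order. -/
def SameWeakOrder (x y : Finset C) : Prop :=
  ∀ a b : C, (a ∈ x ∧ b ∉ x) ↔ (a ∈ y ∧ b ∉ y)

section StmtAux
set_option linter.unusedSectionVars false

open scoped Classical

variable {C : Type*} [Fintype C] [DecidableEq C] {n : ℕ}

/-- `S` is a prefix set with respect to the voter order `σ`. -/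
def PreS {n : ℕ} (σ : Fin n → ℝ) (S : Fin n → Prop) : Prop :=
  ∀ i j, S i → ¬ S j → σ i < σ j

/-- `S` is a suffix set with respect to the voter order `σ`. -/
def SufS {n : ℕ} (σ : Fin n → ℝ) (S : Fin n → Prop) : Prop :=
  ∀ i j, S i → ¬ S j → σ j < σ i

/-- Voters approving `a` but not `b`. -/
def Dd {n : ℕ} (P : Fin n → Finset C) (a b : C) : Fin n → Prop :=
  fun i => a ∈ P i ∧ b ∉ P i

/-- The derived candidate order. -/
def Prec (P : Fin n → Finset C) (σ : Fin n → ℝ) (a b : C) : Prop :=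
  ((∃ i, Dd P a b i) ∧ PreS σ (Dd P a b)) ∨ ((∃ i, Dd P b a i) ∧ SufS σ (Dd P b a))

lemma noPreSuf {σ : Fin n → ℝ} {S : Fin n → Prop} (h1 : PreS σ S) (h2 : SufS σ S)
    {i j : Fin n} (hi : S i) (hj : ¬ S j) : False :=
  lt_asymm (h1 i j hi hj) (h2 i j hi hj)

variable {P : Fin n → Finset C} {σ : Fin n → ℝ}

lemma prec_pre (hc : ∀ c : C, (∃ i, c ∈ P i) ∧ (∃ i, c ∉ P i))
    (hst : ∀ a b : C, (PreS σ (Dd P a b) ∧ SufS σ (Dd P b a)) ∨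
      (PreS σ (Dd P b a) ∧ SufS σ (Dd P a b)))
    {a b : C} (hab : Prec P σ a b) : PreS σ (Dd P a b) ∧ SufS σ (Dd P b a) := by
  rcases hst a b with h | h
  · exact h
  · exfalso
    rcases hab with ⟨⟨i, hi⟩, hpre⟩ | ⟨⟨i, hi⟩, hsuf⟩
    · obtain ⟨j, hj⟩ := (hc a).2
      exact noPreSuf hpre h.2 hi (fun hcon => hj hcon.1)
    · obtain ⟨j, hj⟩ := (hc b).2
      exact noPreSuf h.1 hsuf hi (fun hcon => hj hcon.1)

lemma prec_irrefl {a : C} (h : Prec P σ a a) : False := by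
  rcases h with ⟨⟨i, hi⟩, _⟩ | ⟨⟨i, hi⟩, _⟩ <;> exact hi.2 hi.1

lemma prec_asymm (hc : ∀ c : C, (∃ i, c ∈ P i) ∧ (∃ i, c ∉ P i))
    (hst : ∀ a b : C, (PreS σ (Dd P a b) ∧ SufS σ (Dd P b a)) ∨
      (PreS σ (Dd P b a) ∧ SufS σ (Dd P a b)))
    {a b : C} (h1 : Prec P σ a b) (h2 : Prec P σ b a) : False := by
  obtain ⟨hpab, hsba⟩ := prec_pre hc hst h1
  obtain ⟨hpba, hsab⟩ := prec_pre hc hst h2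
  rcases h1 with ⟨⟨i, hi⟩, _⟩ | ⟨⟨i, hi⟩, _⟩
  · obtain ⟨j, hj⟩ := (hc a).2
    exact noPreSuf hpab hsab hi (fun hcon => hj hcon.1)
  · obtain ⟨j, hj⟩ := (hc b).2
    exact noPreSuf hpba hsba hi (fun hcon => hj hcon.1)

lemma prec_total
    (hst : ∀ a b : C, (PreS σ (Dd P a b) ∧ SufS σ (Dd P b a)) ∨
      (PreS σ (Dd P b a) ∧ SufS σ (Dd P a b)))
    {a b : C} (h : ∃ i, Dd P a b i ∨ Dd P b a i) :
    Prec P σ a b ∨ Prec P σ b a := by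
  obtain ⟨i, hi⟩ := h
  rcases hst a b with ⟨h1, h2⟩ | ⟨h1, h2⟩
  · rcases hi with hi | hi
    · exact Or.inl (Or.inl ⟨⟨i, hi⟩, h1⟩)
    · exact Or.inl (Or.inr ⟨⟨i, hi⟩, h2⟩)
  · rcases hi with hi | hi
    · exact Or.inr (Or.inr ⟨⟨i, hi⟩, h2⟩)
    · exact Or.inr (Or.inl ⟨⟨i, hi⟩, h1⟩)

lemma prec_cycle (hc : ∀ c : C, (∃ i, c ∈ P i) ∧ (∃ i, c ∉ P i))
    (hst : ∀ a b : C, (PreS σ (Dd P a b) ∧ SufS σ (Dd P b a)) ∨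
      (PreS σ (Dd P b a) ∧ SufS σ (Dd P a b)))
    {a b c : C} (h1 : Prec P σ a b) (h2 : Prec P σ b c) (h3 : Prec P σ c a) : False := by
  obtain ⟨hpab, hsba⟩ := prec_pre hc hst h1
  obtain ⟨hpbc, hscb⟩ := prec_pre hc hst h2
  obtain ⟨hpca, hsac⟩ := prec_pre hc hst h3
  have hex : ∃ i, Dd P c a i ∨ Dd P a c i := by
    rcases h3 with ⟨⟨i, hi⟩, _⟩ | ⟨⟨i, hi⟩, _⟩
    · exact ⟨i, Or.inl hi⟩
    · exact ⟨i, Or.inr hi⟩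
  obtain ⟨i, hi | hi⟩ := hex
  · by_cases hb : b ∈ P i
    · obtain ⟨j, hj⟩ := (hc a).1
      have l1 := hsba i j ⟨hb, hi.2⟩ (fun hcon => hcon.2 hj)
      have l2 := hpca i j hi (fun hcon => hcon.2 hj)
      linarith
    · obtain ⟨j, hj⟩ := (hc c).2
      have l1 := hscb i j ⟨hi.1, hb⟩ (fun hcon => hj hcon.1)
      have l2 := hpca i j hi (fun hcon => hj hcon.1)
      linarith
  · by_cases hb : b ∈ P i
    · obtain ⟨j, hj⟩ := (hc c).1
      have l1 := hpbc i j ⟨hb, hi.2⟩ (fun hcon => hcon.2 hj)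
      have l2 := hsac i j hi (fun hcon => hcon.2 hj)
      linarith
    · obtain ⟨j, hj⟩ := (hc a).2
      have l1 := hpab i j ⟨hi.1, hb⟩ (fun hcon => hj hcon.1)
      have l2 := hsac i j hi (fun hcon => hj hcon.1)
      linarith

lemma prec_trans (hc : ∀ c : C, (∃ i, c ∈ P i) ∧ (∃ i, c ∉ P i))
    (hst : ∀ a b : C, (PreS σ (Dd P a b) ∧ SufS σ (Dd P b a)) ∨
      (PreS σ (Dd P b a) ∧ SufS σ (Dd P a b)))
    {a b c : C} (h1 : Prec P σ a b) (h2 : Prec P σ b c) : Prec P σ a c := by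
  by_contra hac
  by_cases hne : ∃ i, Dd P a c i ∨ Dd P c a i
  · rcases prec_total hst hne with h | h
    · exact hac h
    · exact prec_cycle hc hst h1 h2 h
  · push_neg at hne
    have heq : ∀ i, a ∈ P i ↔ c ∈ P i := by
      intro i
      have h' := hne i
      constructor
      · intro ha; by_contra hcc; exact h'.1 ⟨ha, hcc⟩
      · intro hcc; by_contra ha; exact h'.2 ⟨hcc, ha⟩
    have hD1 : Dd P a b = Dd P c b := by
      funext i; simp only [Dd]; rw [heq i]
    have hD2 : Dd P b a = Dd P b c := by
      funext i; simp only [Dd]; rw [heq i]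
    have h1' : Prec P σ c b := by
      unfold Prec at h1 ⊢
      rw [hD1, hD2] at h1
      exact h1
    exact prec_asymm hc hst h2 h1'

lemma vote_mono (hc : ∀ c : C, (∃ i, c ∈ P i) ∧ (∃ i, c ∉ P i))
    (hst : ∀ a b : C, (PreS σ (Dd P a b) ∧ SufS σ (Dd P b a)) ∨
      (PreS σ (Dd P b a) ∧ SufS σ (Dd P a b)))
    (i : Fin n) :
    (∀ a b : C, a ∈ P i → b ∉ P i → Prec P σ a b) ∨
    (∀ a b : C, a ∈ P i → b ∉ P i → Prec P σ b a) := by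
  by_cases hmix : ∃ a b : C, a ∈ P i ∧ b ∉ P i ∧ Prec P σ b a
  · obtain ⟨a, b, ha, hb, hba⟩ := hmix
    right
    intro a' b' ha' hb'
    rcases prec_total hst ⟨i, Or.inl ⟨ha', hb'⟩⟩ with ha'b' | h
    · exfalso
      obtain ⟨_, hsab⟩ := prec_pre hc hst hba
      obtain ⟨hpa'b', _⟩ := prec_pre hc hst ha'b'
      rcases prec_total hst ⟨i, Or.inl ⟨ha', hb⟩⟩ with h1 | h1
      · obtain ⟨hp, _⟩ := prec_pre hc hst h1
        obtain ⟨j, hj⟩ := (hc b).1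
        have l1 := hp i j ⟨ha', hb⟩ (fun hcon => hcon.2 hj)
        have l2 := hsab i j ⟨ha, hb⟩ (fun hcon => hcon.2 hj)
        linarith
      · obtain ⟨_, hs⟩ := prec_pre hc hst h1
        obtain ⟨j, hj⟩ := (hc a').2
        have l1 := hs i j ⟨ha', hb⟩ (fun hcon => hj hcon.1)
        have l2 := hpa'b' i j ⟨ha', hb'⟩ (fun hcon => hj hcon.1)
        linarith
    · exact h
  · left
    intro a b ha hb
    rcases prec_total hst ⟨i, Or.inl ⟨ha, hb⟩⟩ with h | h
    · exact h
    · exact absurd ⟨a, b, ha, hb, h⟩ hmix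

/-- rank of a candidate: number of candidates strictly before it. -/
noncomputable def rkF (P : Fin n → Finset C) (σ : Fin n → ℝ) (c : C) : ℕ :=
  (Finset.univ.filter (fun b => Prec P σ b c)).card

/-- the candidate placement on the real line. -/
noncomputable def posF (P : Fin n → Finset C) (σ : Fin n → ℝ) (c : C) : ℝ :=
  (rkF P σ c : ℝ) + ((Fintype.equivFin C c : ℕ) : ℝ) / (Fintype.card C + 1)

lemma rk_lt (hc : ∀ c : C, (∃ i, c ∈ P i) ∧ (∃ i, c ∉ P i))
    (hst : ∀ a b : C, (PreS σ (Dd P a b) ∧ SufS σ (Dd P b a)) ∨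
      (PreS σ (Dd P b a) ∧ SufS σ (Dd P a b)))
    {a c : C} (h : Prec P σ a c) : rkF P σ a < rkF P σ c := by
  apply Finset.card_lt_card
  rw [Finset.ssubset_def]
  constructor
  · intro y hy
    simp only [Finset.mem_filter, Finset.mem_univ, true_and] at hy ⊢
    exact prec_trans hc hst hy h
  · intro hsub
    have hada : a ∈ Finset.univ.filter (fun b => Prec P σ b c) := by
      simp only [Finset.mem_filter, Finset.mem_univ, true_and]; exact h
    have h2 := hsub hada
    simp only [Finset.mem_filter, Finset.mem_univ, true_and] at h2
    exact prec_irrefl h2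

lemma posF_frac_nonneg (c : C) : (0:ℝ) ≤ ((Fintype.equivFin C c : ℕ) : ℝ) / (Fintype.card C + 1) := by
  positivity

lemma posF_frac_lt_one (c : C) : ((Fintype.equivFin C c : ℕ) : ℝ) / (Fintype.card C + 1) < 1 := by
  rw [div_lt_one (by positivity)]
  have h1 : ((Fintype.equivFin C c : ℕ) : ℝ) < (Fintype.card C : ℝ) := by
    exact_mod_cast (Fintype.equivFin C c).isLt
  linarith

lemma posF_nonneg (c : C) : (0:ℝ) ≤ posF P σ c := by
  unfold posF
  positivity

lemma posF_lt {a c : C} (h : rkF P σ a < rkF P σ c) : posF P σ a < posF P σ c := by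
  unfold posF
  have h1 : (rkF P σ a : ℝ) + 1 ≤ (rkF P σ c : ℝ) := by exact_mod_cast h
  have h2 := posF_frac_lt_one (C := C) a
  have h3 := posF_frac_nonneg (C := C) c
  linarith

lemma posF_inj : Function.Injective (posF P σ) := by
  intro a b hab
  rcases lt_trichotomy (rkF P σ a) (rkF P σ b) with h | h | h
  · exact absurd hab (ne_of_lt (posF_lt h))
  · unfold posF at hab
    rw [h] at hab
    have h2 : ((Fintype.equivFin C a : ℕ) : ℝ) / (Fintype.card C + 1)
        = ((Fintype.equivFin C b : ℕ) : ℝ) / (Fintype.card C + 1) := by linarith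
    have hne : ((Fintype.card C : ℝ) + 1) ≠ 0 := by positivity
    rw [div_eq_div_iff hne hne] at h2
    have h3 : ((Fintype.equivFin C a : ℕ) : ℝ) = ((Fintype.equivFin C b : ℕ) : ℝ) :=
      mul_right_cancel₀ hne h2
    have h4 : (Fintype.equivFin C a : ℕ) = (Fintype.equivFin C b : ℕ) := by exact_mod_cast h3
    exact (Fintype.equivFin C).injective (Fin.val_injective h4)
  · exact absurd hab.symm (ne_of_lt (posF_lt h))

end StmtAux


theorem stmt3 {C : Type*} [Fintype C] [DecidableEq C] {n : ℕ}
    (P : Fin n → Finset C)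
    (hc : ∀ c : C, (∃ i, c ∈ P i) ∧ (∃ i, c ∉ P i))
    (h : WSC P) : CEI P := by
  classical
  obtain ⟨σ, hσ, hwsc⟩ := h
  have hst : ∀ a b : C, (PreS σ (Dd P a b) ∧ SufS σ (Dd P b a)) ∨
      (PreS σ (Dd P b a) ∧ SufS σ (Dd P a b)) := by
    intro a b
    rcases hwsc a b with ⟨h1, h2, h3⟩ | ⟨h1, h2, h3⟩
    · left
      constructor
      · intro i j hi hj
        by_cases hba : b ∈ P j ∧ a ∉ P j
        · exact h3 i j hi hba
        · exact h1 i j hi ⟨hj, hba⟩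
      · intro i j hi hj
        by_cases hab : a ∈ P j ∧ b ∉ P j
        · exact h3 j i hab hi
        · exact h2 j i ⟨hab, hj⟩ hi
    · right
      constructor
      · intro i j hi hj
        by_cases hab : a ∈ P j ∧ b ∉ P j
        · exact h3 i j hi hab
        · exact h1 i j hi ⟨hab, hj⟩
      · intro i j hi hj
        by_cases hba : b ∈ P j ∧ a ∉ P j
        · exact h3 j i hba hi
        · exact h2 j i ⟨hj, hba⟩ hi
  refine ⟨posF P σ, posF_inj, fun i => ?_⟩
  rcases Finset.eq_empty_or_nonempty (P i) with he | hne
  · refine Or.inl ⟨-1, fun c => ?_⟩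
    constructor
    · intro hcm; rw [he] at hcm; exact absurd hcm (Finset.notMem_empty c)
    · intro hle
      exact absurd hle (by have := posF_nonneg (P := P) (σ := σ) c; linarith)
  · rcases vote_mono hc hst i with hall | hall
    · refine Or.inl ⟨(P i).sup' hne (posF P σ), fun c => ?_⟩
      constructor
      · intro hcm; exact Finset.le_sup' _ hcm
      · intro hle
        by_contra hcm
        have hgt : (P i).sup' hne (posF P σ) < posF P σ c := by
          rw [Finset.sup'_lt_iff]
          intro a ha
          exact posF_lt (rk_lt hc hst (hall a c ha hcm))
        linarith
    · refine Or.inr ⟨(P i).inf' hne (posF P σ), fun c => ?_⟩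
      constructor
      · intro hcm; exact Finset.inf'_le _ hcm
      · intro hle
        by_contra hcm
        have hgt : posF P σ c < (P i).inf' hne (posF P σ) := by
          rw [Finset.lt_inf'_iff]
          intro a ha
          exact posF_lt (rk_lt hc hst (hall a c ha hcm))
        linarith
end

section
/- A dichotomous profile P satisfies WSC if and only if there exist three votes u, v, w such that (1) every vote of P induces the same dichotomous weak order as one of u, v, w, and (2) the dichotomous weak order of v equals that of u ∩ w or that of u ∪ w. -/
open Finset Function

variable {C : Type*} [Fintype C] [DecidableEq C]

/-!
Encode the weak order of a vote `s` on the pair `(a, b)` by `voteCmp s a b ∈ {0, 1, 2}`. An ordering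
of the voters is a WSC ordering exactly when, for each pair, this value is monotone along it. Then
every vote lies between the first vote `x` and the last vote `z`, and a vote between `x` and `z`
induces the weak order of `x`, `z`, `x ∩ z` or `x ∪ z`. The orders of `x ∩ z` and `x ∪ z` are not
both needed: a vote of the order of `x ∩ z` lies between `x` and a vote of the order of `x ∪ z`, or
between such a vote and `z`, and since these pairs are nested it then induces one of their orders.
Conversely, when `v` lies between `u` and `w` (as `u ∩ w` and `u ∪ w` do), listing the voters of the
order of `u`, then `v`, then `w`, with ties broken arbitrarily, is a WSC ordering.
-/

section Votes

variable {C : Type*}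

lemma SameWeakOrder.refl (s : Finset C) : SameWeakOrder s s := fun _ _ => Iff.rfl

lemma SameWeakOrder.symm {s t : Finset C} (h : SameWeakOrder s t) : SameWeakOrder t s :=
  fun a b => (h a b).symm

lemma sameWeakOrder_of_indifferent {s t : Finset C} (hs : ∀ a ∈ s, ∀ b, b ∈ s)
    (ht : ∀ a ∈ t, ∀ b, b ∈ t) : SameWeakOrder s t :=
  fun a b => iff_of_false (fun h => h.2 (hs a h.1 b)) (fun h => h.2 (ht a h.1 b))

variable [DecidableEq C]

def voteCmp (s : Finset C) (a b : C) : ℕ :=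
  if a ∈ s ∧ b ∉ s then 0 else if b ∈ s ∧ a ∉ s then 2 else 1

lemma voteCmp_eq_zero {s : Finset C} {a b : C} : voteCmp s a b = 0 ↔ a ∈ s ∧ b ∉ s := by
  unfold voteCmp; split_ifs <;> simp_all

lemma voteCmp_eq_one {s : Finset C} {a b : C} :
    voteCmp s a b = 1 ↔ ¬(a ∈ s ∧ b ∉ s) ∧ ¬(b ∈ s ∧ a ∉ s) := by
  unfold voteCmp; split_ifs <;> simp_all

lemma voteCmp_eq_two {s : Finset C} {a b : C} : voteCmp s a b = 2 ↔ b ∈ s ∧ a ∉ s := by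
  unfold voteCmp; split_ifs <;> simp_all

lemma voteCmp_le_two (s : Finset C) (a b : C) : voteCmp s a b ≤ 2 := by
  unfold voteCmp; split_ifs <;> omega

lemma voteCmp_swap (s : Finset C) (a b : C) : voteCmp s b a = 2 - voteCmp s a b := by
  unfold voteCmp; split_ifs <;> simp_all

lemma SameWeakOrder.voteCmp_eq {s t : Finset C} (h : SameWeakOrder s t) : voteCmp s = voteCmp t := by
  funext a b
  simp only [voteCmp, h a b, h b a]

/-- As `voteCmp s b a = 2 - voteCmp s a b`, the second disjunct says that `voteCmp y a b` lies between
`voteCmp z a b` and `voteCmp x a b`. -/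
def IsBetween (x y z : Finset C) : Prop :=
  ∀ a b : C, (voteCmp x a b ≤ voteCmp y a b ∧ voteCmp y a b ≤ voteCmp z a b) ∨
    (voteCmp x b a ≤ voteCmp y b a ∧ voteCmp y b a ≤ voteCmp z b a)

lemma IsBetween.congr {x y z x' y' z' : Finset C} (h : IsBetween x y z) (hx : SameWeakOrder x x')
    (hy : SameWeakOrder y y') (hz : SameWeakOrder z z') : IsBetween x' y' z' := by
  rwa [IsBetween, ← hx.voteCmp_eq, ← hy.voteCmp_eq, ← hz.voteCmp_eq]

lemma IsBetween.symm {x y z : Finset C} (h : IsBetween x y z) : IsBetween z y x := fun a b => by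
  have := h a b
  simp only [voteCmp_swap _ a b] at this ⊢
  have := voteCmp_le_two x a b
  have := voteCmp_le_two y a b
  have := voteCmp_le_two z a b
  omega

lemma isBetween_inter (x z : Finset C) : IsBetween x (x ∩ z) z := by
  intro a b
  simp only [voteCmp, mem_inter]
  split_ifs <;> first | omega | tauto

lemma isBetween_union (x z : Finset C) : IsBetween x (x ∪ z) z := by
  intro a b
  simp only [voteCmp, mem_union]
  split_ifs <;> first | omega | tauto

lemma IsBetween.mem_of_dominates {x y z : Finset C} (h : IsBetween x y z) {a b : C}
    (hx : b ∈ x → a ∈ x) (hz : b ∈ z → a ∈ z) (hb : b ∈ y) : a ∈ y := by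
  by_contra ha
  rcases h a b with ⟨-, h⟩ | ⟨h, -⟩
  · rw [voteCmp_eq_two.mpr ⟨hb, ha⟩] at h
    have := voteCmp_le_two z a b
    obtain ⟨hbz, haz⟩ := voteCmp_eq_two.mp (by omega : voteCmp z a b = 2)
    exact haz (hz hbz)
  · rw [voteCmp_eq_zero.mpr ⟨hb, ha⟩] at h
    obtain ⟨hbx, hax⟩ := voteCmp_eq_zero.mp (by omega : voteCmp x b a = 0)
    exact hax (hx hbx)

lemma IsBetween.prefers_of_prefers {x y z : Finset C} (h : IsBetween x y z) {a b : C}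
    (hx : a ∈ x ∧ b ∉ x) (hz : a ∈ z ∧ b ∉ z) : a ∈ y ∧ b ∉ y := by
  rcases h a b with ⟨-, h⟩ | ⟨h, -⟩
  · rw [voteCmp_eq_zero.mpr hz] at h
    exact voteCmp_eq_zero.mp (by omega)
  · rw [voteCmp_eq_two.mpr hx] at h
    have := voteCmp_le_two y b a
    exact voteCmp_eq_two.mp (by omega)

lemma IsBetween.eq_of_mem_of_notMem {x y z : Finset C} (h : IsBetween x y z) {e f : C}
    (he : e ∈ y) (hf : f ∉ y) : y = x ∨ y = z ∨ y = x ∩ z ∨ y = x ∪ z := by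
  have dominates : ∀ a b, (b ∈ x → a ∈ x) → (b ∈ z → a ∈ z) → b ∈ y → a ∈ y :=
    fun _ _ => h.mem_of_dominates
  have hinter : ∀ c, c ∈ x → c ∈ z → c ∈ y := fun c hx hz =>
    dominates c e (fun _ => hx) (fun _ => hz) he
  have hunion : ∀ c ∈ y, c ∈ x ∨ c ∈ z := by
    intro c hc
    by_contra! hxz
    exact hf (dominates f c (fun h => absurd h hxz.1) (fun h => absurd h hxz.2) hc)
  -- `y` is a union of cells of the partition cut out by `x` and `z`; it contains `x ∩ z` and misses
  -- the complement of `x ∪ z`, so only the cells `x \ z` and `z \ x` remain to be decided.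
  by_cases hB : ∃ b ∈ y, b ∈ x ∧ b ∉ z <;> by_cases hC : ∃ c ∈ y, c ∈ z ∧ c ∉ x
  · obtain ⟨b, hby, hbx, hbz⟩ := hB
    obtain ⟨c, hcy, hcz, hcx⟩ := hC
    refine .inr <| .inr <| .inr <| ext fun d => ?_
    grind
  · obtain ⟨b, hby, hbx, hbz⟩ := hB
    refine .inl <| ext fun d => ?_
    grind
  · obtain ⟨c, hcy, hcz, hcx⟩ := hC
    refine .inr <| .inl <| ext fun d => ?_
    grind
  · refine .inr <| .inr <| .inl <| ext fun d => ?_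
    grind

lemma IsBetween.cases {x y z : Finset C} (h : IsBetween x y z) :
    SameWeakOrder y x ∨ SameWeakOrder y z ∨ SameWeakOrder y (x ∩ z) ∨ SameWeakOrder y (x ∪ z) := by
  by_cases hy : ∃ e ∈ y, ∃ f, f ∉ y
  · obtain ⟨e, he, f, hf⟩ := hy
    rcases h.eq_of_mem_of_notMem he hf with rfl | rfl | rfl | rfl
    exacts [.inl (.refl _), .inr (.inl (.refl _)), .inr (.inr (.inl (.refl _))),
      .inr (.inr (.inr (.refl _)))]
  push Not at hy
  by_cases hmeet : ∃ a, a ∈ x ∧ a ∈ z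
  · obtain ⟨a, hax, haz⟩ := hmeet
    refine .inr <| .inr <| .inr <| sameWeakOrder_of_indifferent hy fun _ _ d => ?_
    by_contra hd
    rw [mem_union, not_or] at hd
    obtain ⟨hay, hdy⟩ := h.prefers_of_prefers ⟨hax, hd.1⟩ ⟨haz, hd.2⟩
    exact hdy (hy a hay d)
  · refine .inr <| .inr <| .inl <| sameWeakOrder_of_indifferent hy fun c hc => ?_
    exact absurd ⟨c, mem_inter.mp hc⟩ hmeet

lemma IsBetween.sameWeakOrder_of_subset {x y z : Finset C} (h : IsBetween x y z) (hzx : z ⊆ x) :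
    SameWeakOrder y x ∨ SameWeakOrder y z := by
  rcases h.cases with h | h | h | h
  · exact .inl h
  · exact .inr h
  · exact .inr (inter_eq_right.mpr hzx ▸ h)
  · exact .inl (union_eq_left.mpr hzx ▸ h)

end Votes

section Profiles

variable {C : Type*} [DecidableEq C] {n : ℕ}

def IsWSCOrder {α : Type*} [Preorder α] (P : Fin n → Finset C) (σ : Fin n → α) : Prop :=
  ∀ a b : C, (∀ i j, σ i ≤ σ j → voteCmp (P i) a b ≤ voteCmp (P j) a b) ∨
    (∀ i j, σ i ≤ σ j → voteCmp (P i) b a ≤ voteCmp (P j) b a)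

lemma before_blocks_iff {S M T : Fin n → Prop} (σ : Fin n → ℝ) (f : Fin n → ℕ)
    (hS : ∀ i, S i ↔ f i = 0) (hM : ∀ i, M i ↔ f i = 1) (hT : ∀ i, T i ↔ f i = 2)
    (hf : ∀ i, f i ≤ 2) :
    (Before σ S M ∧ Before σ M T ∧ Before σ S T) ↔ ∀ i j, σ i ≤ σ j → f i ≤ f j := by
  simp only [Before, hS, hM, hT]
  constructor
  · rintro ⟨h01, h12, h02⟩ i j hij
    by_contra! hji
    have := hf i
    obtain ⟨hj, hi⟩ | ⟨hj, hi⟩ | ⟨hj, hi⟩ :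
        (f j = 0 ∧ f i = 1) ∨ (f j = 1 ∧ f i = 2) ∨ (f j = 0 ∧ f i = 2) := by omega
    exacts [(h01 j i hj hi).not_ge hij, (h12 j i hj hi).not_ge hij, (h02 j i hj hi).not_ge hij]
  · intro h
    refine ⟨?_, ?_, ?_⟩ <;> intro i j hi hj <;> by_contra! hji <;> have := h j i hji <;> omega

lemma wsc_iff [Fintype C] (P : Fin n → Finset C) :
    WSC P ↔ ∃ σ : Fin n → ℝ, Injective σ ∧ IsWSCOrder P σ := by
  refine exists_congr fun σ => and_congr_right fun _ => forall₂_congr fun a b => or_congr ?_ ?_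
  · exact before_blocks_iff σ _ (fun _ => voteCmp_eq_zero.symm) (fun _ => voteCmp_eq_one.symm)
      (fun _ => voteCmp_eq_two.symm) (fun _ => voteCmp_le_two _ _ _)
  · exact before_blocks_iff σ _ (fun _ => voteCmp_eq_zero.symm)
      (fun _ => (voteCmp_eq_one.trans and_comm).symm) (fun _ => voteCmp_eq_two.symm)
      (fun _ => voteCmp_le_two _ _ _)

lemma IsWSCOrder.isBetween {α : Type*} [Preorder α] {P : Fin n → Finset C} {σ : Fin n → α}
    (h : IsWSCOrder P σ) {i j k : Fin n} (hij : σ i ≤ σ j) (hjk : σ j ≤ σ k) :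
    IsBetween (P i) (P j) (P k) := fun a b =>
  (h a b).imp (fun h => ⟨h i j hij, h j k hjk⟩) (fun h => ⟨h i j hij, h j k hjk⟩)

lemma IsWSCOrder.of_le_imp {α β : Type*} [Preorder α] [Preorder β] {P : Fin n → Finset C}
    {σ : Fin n → α} {τ : Fin n → β} (h : IsWSCOrder P τ) (hστ : ∀ i j, σ i ≤ σ j → τ i ≤ τ j) :
    IsWSCOrder P σ := fun a b =>
  (h a b).imp (fun h i j hij => h i j (hστ i j hij)) (fun h i j hij => h i j (hστ i j hij))

theorem IsWSCOrder.exists_three {α : Type*} [LinearOrder α] {P : Fin n → Finset C}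
    {σ : Fin n → α} (hσ : IsWSCOrder P σ) :
    ∃ u v w : Finset C,
      (∀ i, SameWeakOrder (P i) u ∨ SameWeakOrder (P i) v ∨ SameWeakOrder (P i) w) ∧
      (SameWeakOrder v (u ∩ w) ∨ SameWeakOrder v (u ∪ w)) := by
  rcases isEmpty_or_nonempty (Fin n) with hn | hn
  · exact ⟨∅, ∅, ∅, isEmptyElim, .inl (.refl _)⟩
  obtain ⟨i₀, -, hi₀⟩ := exists_min_image univ σ univ_nonempty
  obtain ⟨i₁, -, hi₁⟩ := exists_max_image univ σ univ_nonempty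
  set x := P i₀
  set z := P i₁
  by_cases hinter : ∀ j, SameWeakOrder (P j) x ∨ SameWeakOrder (P j) (x ∩ z) ∨ SameWeakOrder (P j) z
  · exact ⟨x, x ∩ z, z, hinter, .inl (.refl _)⟩
  by_cases hunion : ∀ j, SameWeakOrder (P j) x ∨ SameWeakOrder (P j) (x ∪ z) ∨ SameWeakOrder (P j) z
  · exact ⟨x, x ∪ z, z, hunion, .inr (.refl _)⟩
  exfalso
  push Not at hinter hunion
  obtain ⟨j₁, hx₁, hxz₁, hz₁⟩ := hinter
  obtain ⟨j₂, hx₂, hxz₂, hz₂⟩ := hunion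
  have hbetween j := hσ.isBetween (hi₀ j (mem_univ _)) (hi₁ j (mem_univ _))
  have h₁ : SameWeakOrder (P j₁) (x ∪ z) :=
    (((hbetween j₁).cases.resolve_left hx₁).resolve_left hz₁).resolve_left hxz₁
  have h₂ : SameWeakOrder (P j₂) (x ∩ z) :=
    (((hbetween j₂).cases.resolve_left hx₂).resolve_left hz₂).resolve_right hxz₂
  rcases le_total (σ j₁) (σ j₂) with h | h
  · have := (hσ.isBetween h (hi₁ j₂ (mem_univ _))).congr h₁ (.refl _) (.refl _)
    rcases this.sameWeakOrder_of_subset subset_union_right with h | h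
    exacts [hxz₂ h, hz₂ h]
  · have := (hσ.isBetween (hi₀ j₂ (mem_univ _)) h).congr (.refl _) (.refl _) h₁
    rcases this.symm.sameWeakOrder_of_subset subset_union_left with h | h
    exacts [hxz₂ h, hx₂ h]

lemma IsWSCOrder.comp {m : ℕ} {α : Type*} [Preorder α] {Q : Fin m → Finset C} {σ : Fin m → α}
    (h : IsWSCOrder Q σ) {P : Fin n → Finset C} {t : Fin n → Fin m}
    (hP : ∀ i, SameWeakOrder (P i) (Q (t i))) : IsWSCOrder P (σ ∘ t) := fun a b => by
  simp only [Function.comp_apply, (hP _).voteCmp_eq]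
  exact (h a b).imp (fun h i j => h (t i) (t j)) (fun h i j => h (t i) (t j))

lemma IsBetween.isWSCOrder {u v w : Finset C} (h : IsBetween u v w) : IsWSCOrder ![u, v, w] id :=
  fun a b => (h a b).imp (fun h => Fin.monotone_iff_le_succ.mpr (by simpa [Fin.forall_fin_two]))
    (fun h => Fin.monotone_iff_le_succ.mpr (by simpa [Fin.forall_fin_two]))

lemma exists_injective_tiebreak (τ : Fin n → ℕ) :
    ∃ σ : Fin n → ℝ, Injective σ ∧ ∀ i j, σ i ≤ σ j → τ i ≤ τ j := by
  have τ_le : ∀ i j : Fin n, n * τ i + i ≤ n * τ j + j → τ i ≤ τ j := by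
    intro i j hij
    by_contra! h
    have := Nat.mul_le_mul_left n h
    have := j.isLt
    nlinarith
  refine ⟨fun i => ((n * τ i + i : ℕ) : ℝ), fun i j hij => ?_,
    fun i j hij => τ_le i j (Nat.cast_le.mp hij)⟩
  have hij : n * τ i + i = n * τ j + j := Nat.cast_injective hij
  have hτ : τ i = τ j := le_antisymm (τ_le i j hij.le) (τ_le j i hij.ge)
  rw [hτ] at hij
  exact Fin.ext (by omega)

lemma wsc_of_isBetween [Fintype C] {P : Fin n → Finset C} {u v w : Finset C}
    (huvw : IsBetween u v w)
    (hcover : ∀ i, SameWeakOrder (P i) u ∨ SameWeakOrder (P i) v ∨ SameWeakOrder (P i) w) :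
    WSC P := by
  have hcover' (i : Fin n) : ∃ k : Fin 3, SameWeakOrder (P i) (![u, v, w] k) := by
    rcases hcover i with h | h | h
    exacts [⟨0, h⟩, ⟨1, h⟩, ⟨2, h⟩]
  choose t ht using hcover'
  obtain ⟨σ, hσ, hσt⟩ := exists_injective_tiebreak fun i => (t i : ℕ)
  exact (wsc_iff P).mpr ⟨σ, hσ, (huvw.isWSCOrder.comp ht).of_le_imp hσt⟩

end Profiles

theorem stmt4 {C : Type*} [Fintype C] [DecidableEq C] {n : ℕ}
    (P : Fin n → Finset C) :
    WSC P ↔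
      ∃ u v w : Finset C,
        (∀ i, SameWeakOrder (P i) u ∨ SameWeakOrder (P i) v ∨ SameWeakOrder (P i) w) ∧
        (SameWeakOrder v (u ∩ w) ∨ SameWeakOrder v (u ∪ w)) := by
  constructor
  · intro h
    obtain ⟨σ, -, hσ⟩ := (wsc_iff P).mp h
    exact hσ.exists_three
  · rintro ⟨u, v, w, hcover, hv | hv⟩
    · exact wsc_of_isBetween ((isBetween_inter u w).congr (.refl u) hv.symm (.refl w)) hcover
    · exact wsc_of_isBetween ((isBetween_union u w).congr (.refl u) hv.symm (.refl w)) hcover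
end

section
/- If a dichotomous profile P satisfies CEI, then P satisfies DUE: there exist a mapping ρ of voters and candidates into the real line and a radius r ≥ 0 such that for every voter i, v_i = { c ∈ C : |ρ(i) − ρ(c)| ≤ r }. -/
open Finset Function

variable {C : Type*} [Fintype C] [DecidableEq C]

theorem stmt6 {C : Type*} [Fintype C] [DecidableEq C] {n : ℕ}
    (P : Fin n → Finset C) (h : CEI P) : DUE P := by
  obtain ⟨pos, hinj, hcei⟩ := h
  by_cases hC : Nonempty C
  · obtain ⟨c0⟩ := hC
    have hne : (Finset.univ : Finset C).Nonempty := ⟨c0, Finset.mem_univ c0⟩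
    set m := Finset.univ.inf' hne pos with hm
    set M := Finset.univ.sup' hne pos with hM
    have hmc : ∀ c : C, m ≤ pos c := fun c => Finset.inf'_le pos (Finset.mem_univ c)
    have hcM : ∀ c : C, pos c ≤ M := fun c => Finset.le_sup' pos (Finset.mem_univ c)
    have hmM : m ≤ M := le_trans (hmc c0) (hcM c0)
    set r := M - m + 2 with hr'
    have hr : 0 ≤ r := by simp [hr']; linarith
    have key : ∀ i, ∃ x : ℝ, ∀ c : C, c ∈ P i ↔ |x - pos c| ≤ r := by
      intro i
      rcases hcei i with ⟨t, ht⟩ | ⟨t, ht⟩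
      · refine ⟨max (min t M) (m - 1) - r, fun c => ?_⟩
        rw [ht c, abs_le]
        constructor
        · intro hc
          have := hmc c; have := hcM c
          have h1 : pos c ≤ min t M := le_min hc (hcM c)
          have h2 : min t M ≤ max (min t M) (m - 1) := le_max_left _ _
          have h3 : max (min t M) (m - 1) ≤ M :=
            max_le (min_le_right _ _) (by linarith)
          constructor <;> linarith
        · rintro ⟨h1, h2⟩
          have := hmc c; have := hcM c
          rcases le_total (min t M) (m - 1) with h3 | h3
          · rw [max_eq_right h3] at h1; linarith
          · rw [max_eq_left h3] at h1
            rcases le_total t M with h4 | h4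
            · rw [min_eq_left h4] at h1; linarith
            · rw [min_eq_right h4] at h1; linarith
      · refine ⟨min (max t m) (M + 1) + r, fun c => ?_⟩
        rw [ht c, abs_le]
        constructor
        · intro hc
          have := hmc c; have := hcM c
          rcases le_total (max t m) (M + 1) with h1 | h1
          · rw [min_eq_left h1]
            rcases le_total t m with h4 | h4
            · rw [max_eq_right h4]; constructor <;> linarith
            · rw [max_eq_left h4]; constructor <;> linarith
          · rw [le_sup_iff] at h1
            rcases h1 with h1 | h1 <;>
              [skip; linarith] <;>
              (rw [min_eq_right (le_max_of_le_left h1)]; constructor <;> linarith)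
        · rintro ⟨h1, h2⟩
          have := hmc c; have := hcM c
          rcases le_total (max t m) (M + 1) with h3 | h3
          · rw [min_eq_left h3] at h2
            rcases le_total t m with h4 | h4
            · rw [max_eq_right h4] at h2; linarith
            · rw [max_eq_left h4] at h2; linarith
          · rw [min_eq_right h3] at h2; linarith
    choose ρv hρv using key
    exact ⟨ρv, pos, r, hr, hρv⟩
  · exact ⟨fun _ => 0, fun c => (hC ⟨c⟩).elim, 0, le_refl 0,
      fun i c => (hC ⟨c⟩).elim⟩
end

section
/- If a dichotomous profile P satisfies VEI, then P satisfies DUE. -/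
open Finset Function

variable {C : Type*} [Fintype C] [DecidableEq C]

theorem stmt7 {C : Type*} [Fintype C] [DecidableEq C] {n : ℕ}
    (P : Fin n → Finset C) (h : VEI P) : DUE P := by
  obtain ⟨σ, -, hσ⟩ := h
  obtain ⟨M, hM0, hM⟩ : ∃ M, 0 ≤ M ∧ ∀ i, |σ i| ≤ M :=
    ⟨∑ i, |σ i|, Finset.sum_nonneg (fun i _ => abs_nonneg _),
      fun i => Finset.single_le_sum (fun j _ => abs_nonneg (σ j)) (Finset.mem_univ i)⟩
  set r : ℝ := 2 * M + 2 with hr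
  set clamp : ℝ → ℝ := fun t => max (-(M + 1)) (min t (M + 1)) with hclamp
  have hclb : ∀ t, -(M + 1) ≤ clamp t := fun t => le_max_left _ _
  have hcub : ∀ t, clamp t ≤ M + 1 := fun t =>
    max_le (by linarith) (min_le_right _ _)
  have hA : ∀ t i, σ i ≤ t ↔ σ i ≤ clamp t := by
    intro t i
    obtain ⟨h1, h2⟩ := abs_le.mp (hM i)
    simp only [hclamp, le_max_iff, le_min_iff]
    constructor
    · intro ht; exact Or.inr ⟨ht, by linarith⟩
    · rintro (hx | ⟨hx, -⟩); · linarith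
      · exact hx
  have hB : ∀ t i, t ≤ σ i ↔ clamp t ≤ σ i := by
    intro t i
    obtain ⟨h1, h2⟩ := abs_le.mp (hM i)
    simp only [hclamp, max_le_iff, min_le_iff]
    constructor
    · intro ht; exact ⟨by linarith, Or.inl ht⟩
    · rintro ⟨-, (hx | hx)⟩; · exact hx
      · linarith
  classical
  refine ⟨σ, fun c =>
    if hp : ∃ t, ∀ i, c ∈ P i ↔ σ i ≤ t then clamp hp.choose - r
    else clamp ((hσ c).resolve_left hp).choose + r, r, by positivity, ?_⟩
  intro i c
  obtain ⟨h1, h2⟩ := abs_le.mp (hM i)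
  by_cases hp : ∃ t, ∀ i, c ∈ P i ↔ σ i ≤ t
  · simp only [dif_pos hp]
    have ht := hp.choose_spec i
    set t := hp.choose
    have hb1 := hclb t; have hb2 := hcub t
    rw [ht, hA t i, abs_le]
    constructor
    · intro hx; constructor <;> linarith
    · intro ⟨hx, hy⟩; linarith
  · simp only [dif_neg hp]
    have hq := (hσ c).resolve_left hp
    have ht := hq.choose_spec i
    set t := hq.choose
    have hb1 := hclb t; have hb2 := hcub t
    rw [ht, hB t i, abs_le]
    constructor
    · intro hx; constructor <;> linarith
    · intro ⟨hx, hy⟩; linarith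
end

section
/- If a dichotomous profile P satisfies PART, i.e., the distinct votes of P form a partition of the candidate set C into pairwise disjoint sets, then P satisfies DUE. -/
open Finset Function

variable {C : Type*} [Fintype C] [DecidableEq C]

theorem stmt8 {C : Type*} [Fintype C] [DecidableEq C] {n : ℕ}
    (P : Fin n → Finset C) (h : PartitionProfile P) : DUE P := by
  classical
  obtain ⟨hne, hcov, hdisj⟩ := h
  let e := Fintype.equivFin (Finset C)
  let f : Finset C → ℝ := fun s => (e s : ℝ)
  have hf : Injective f := by
    intro a b hab
    have : (e a : ℕ) = e b := by
      have := hab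
      simp only [f] at this
      exact_mod_cast this
    exact e.injective (Fin.ext this)
  choose g hg using hcov
  refine ⟨fun i => f (P i), fun c => f (P (g c)), 0, le_refl _, ?_⟩
  intro i c
  rw [abs_nonpos_iff, sub_eq_zero]
  constructor
  · intro hc
    rcases hdisj i (g c) with heq | hd
    · exact congrArg f heq
    · exact absurd (hg c) (Finset.disjoint_left.mp hd hc)
  · intro hfe
    have : P i = P (g c) := hf hfe
    rw [this]; exact hg c
end

section
/- If a dichotomous profile P satisfies DUE, then P satisfies both VI (voters can be ordered so that the approvers of each candidate form an interval) and CI (candidates can be ordered so that each vote is an interval). -/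
open Finset Function

variable {C : Type*} [Fintype C] [DecidableEq C]

lemma gaps_aux (S : Finset ℝ) :
    ∃ δ : ℝ, 0 < δ ∧ ∀ x ∈ S, ∀ y ∈ S, x < y → x + 2 * δ ≤ y := by
  classical
  set D := ((S ×ˢ S).filter (fun p => p.1 < p.2)).image (fun p : ℝ × ℝ => p.2 - p.1) with hD
  by_cases hne : D.Nonempty
  · refine ⟨D.min' hne / 2, ?_, ?_⟩
    · have hmem := D.min'_mem hne
      simp only [hD, mem_image, mem_filter, mem_product] at hmem
      obtain ⟨⟨x, y⟩, ⟨_, hlt⟩, heq⟩ := hmem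
      simp only at heq hlt
      linarith
    · intro x hx y hy hxy
      have hmem : y - x ∈ D := by
        simp only [hD, mem_image, mem_filter, mem_product]
        exact ⟨(x, y), ⟨⟨hx, hy⟩, hxy⟩, rfl⟩
      have := D.min'_le _ hmem
      linarith
  · refine ⟨1, one_pos, fun x hx y hy hxy => ?_⟩
    exact absurd ⟨y - x, by
      simp only [hD, mem_image, mem_filter, mem_product]
      exact ⟨(x, y), ⟨⟨hx, hy⟩, hxy⟩, rfl⟩⟩ hne

lemma perturb_aux {A B : Type*} [Fintype A] [DecidableEq A] [Fintype B] [DecidableEq B]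
    (g : A → ℝ) (lo hi : B → ℝ) :
    ∃ g' : A → ℝ, Injective g' ∧
      ∀ b : B, ∃ lo' hi' : ℝ, ∀ a : A,
        (lo b ≤ g a ∧ g a ≤ hi b) ↔ (lo' ≤ g' a ∧ g' a ≤ hi') := by
  classical
  obtain ⟨δ, hδ, hgap⟩ :=
    gaps_aux ((Finset.univ.image g) ∪ (Finset.univ.image lo) ∪ (Finset.univ.image hi))
  have hgmem : ∀ a : A, g a ∈
      ((Finset.univ.image g) ∪ (Finset.univ.image lo) ∪ (Finset.univ.image hi)) := by
    intro a; simp [mem_union, mem_image]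
  have hlomem : ∀ b : B, lo b ∈
      ((Finset.univ.image g) ∪ (Finset.univ.image lo) ∪ (Finset.univ.image hi)) := by
    intro b; simp [mem_union, mem_image]
  have hhimem : ∀ b : B, hi b ∈
      ((Finset.univ.image g) ∪ (Finset.univ.image lo) ∪ (Finset.univ.image hi)) := by
    intro b; simp [mem_union, mem_image]
  set m := Fintype.card A with hm
  set e := Fintype.equivFin A with he
  set ε := δ / (m + 1) with hεdef
  have hε : 0 < ε := by positivity
  set g' := fun a => g a + ε * ((e a : ℕ) : ℝ) with hg'
  have hle : ∀ a, g a ≤ g' a := fun a => le_add_of_nonneg_right (by positivity)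
  have hub : ∀ a, g' a ≤ g a + δ := by
    intro a
    have h1 : ((e a : ℕ) : ℝ) ≤ (m : ℝ) := by exact_mod_cast (e a).isLt.le
    have h2 : ε * ((e a : ℕ) : ℝ) ≤ ε * ((m : ℝ) + 1) := by nlinarith
    have h3 : ε * ((m : ℝ) + 1) = δ := by
      rw [hεdef]; field_simp
    simp only [hg']
    linarith
  have hub' : ∀ a, g a + ε * ((e a : ℕ) : ℝ) ≤ g a + δ := fun a => hub a
  have hle' : ∀ a, g a ≤ g a + ε * ((e a : ℕ) : ℝ) := fun a => hle a
  refine ⟨g', ?_, ?_⟩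
  · intro a a' hEq
    rcases lt_trichotomy (g a) (g a') with h | h | h
    · exfalso
      have := hgap _ (hgmem a) _ (hgmem a') h
      have := hub' a; have := hle' a'
      simp only [hg'] at hEq
      linarith
    · have : ε * ((e a : ℕ) : ℝ) = ε * ((e a' : ℕ) : ℝ) := by
        simp only [hg'] at hEq; linarith
      have hcast : ((e a : ℕ) : ℝ) = ((e a' : ℕ) : ℝ) :=
        mul_left_cancel₀ (ne_of_gt hε) this
      have : (e a : ℕ) = (e a' : ℕ) := by exact_mod_cast hcast
      exact e.injective (Fin.ext this)
    · exfalso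
      have := hgap _ (hgmem a') _ (hgmem a) h
      have := hub' a'; have := hle' a
      simp only [hg'] at hEq
      linarith
  · intro b
    refine ⟨lo b, hi b + δ, fun a => ?_⟩
    constructor
    · rintro ⟨h1, h2⟩
      exact ⟨le_trans h1 (hle a), le_trans (hub a) (by linarith)⟩
    · rintro ⟨h1, h2⟩
      constructor
      · by_contra hcon
        push_neg at hcon
        have := hgap _ (hgmem a) _ (hlomem b) hcon
        have := hub a
        linarith
      · by_contra hcon
        push_neg at hcon
        have := hgap _ (hhimem b) _ (hgmem a) hcon
        have := hle a
        linarith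

theorem stmt9 {C : Type*} [Fintype C] [DecidableEq C] {n : ℕ}
    (P : Fin n → Finset C) (h : DUE P) : VI P ∧ CI P := by
  obtain ⟨ρv, ρc, r, hr, hP⟩ := h
  constructor
  · obtain ⟨σ, hinj, hint⟩ := perturb_aux ρv (fun c => ρc c - r) (fun c => ρc c + r)
    refine ⟨σ, hinj, fun c => ?_⟩
    obtain ⟨lo, hi, hlh⟩ := hint c
    refine ⟨lo, hi, fun i => ?_⟩
    rw [hP i c, abs_le, ← hlh i]
    constructor <;> rintro ⟨h1, h2⟩ <;> constructor <;> linarith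
  · obtain ⟨pos, hinj, hint⟩ := perturb_aux ρc (fun i => ρv i - r) (fun i => ρv i + r)
    refine ⟨pos, hinj, fun i => ?_⟩
    obtain ⟨lo, hi, hlh⟩ := hint i
    refine ⟨lo, hi, fun c => ?_⟩
    rw [hP i c, abs_le, ← hlh c]
    constructor <;> rintro ⟨h1, h2⟩ <;> constructor <;> linarith
end

section
/- A dichotomous profile P satisfies CI if and only if P satisfies PSP, i.e., there exists a profile of total (strict linear) orders refining P that is single-peaked with respect to some axis. -/
open Finset Function

variable {C : Type*} [Fintype C] [DecidableEq C]

theorem stmt11 {C : Type*} [Fintype C] [DecidableEq C] {n : ℕ}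
    (P : Fin n → Finset C) : CI P ↔ PSP P := by
  constructor
  · rintro ⟨pos, hpos, hCI⟩
    obtain ⟨M, hM⟩ := Finite.exists_le (fun c : C => |pos c|)
    have hMb : ∀ c : C, -M ≤ pos c ∧ pos c ≤ M := fun c => abs_le.mp (hM c)
    -- choose left endpoint for each voter
    choose lo hi hlh using hCI
    refine ⟨fun i c => if lo i ≤ pos c then -(pos c) else pos c - (2*M+1), pos, hpos,
      ?_, ?_, ?_⟩
    · intro i x y hxy
      simp only at hxy
      apply hpos
      split_ifs at hxy with h1 h2 h2
      · linarith
      · have := hMb x; have := hMb y; linarith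
      · have := hMb x; have := hMb y; linarith
      · linarith
    · intro i a b ha hb
      have hA := (hlh i a).mp ha
      have hB := fun h => hb ((hlh i b).mpr h)
      simp only
      rw [if_pos hA.1]
      split_ifs with h1
      · have : hi i < pos b := by
          by_contra hc; exact hB ⟨h1, le_of_not_gt hc⟩
        linarith [hA.2]
      · have := hMb a; have := hMb b; linarith
    · intro i a b c hord hba
      simp only at hba ⊢
      rcases hord with ⟨h1, h2⟩ | ⟨h1, h2⟩
      · by_cases hb : lo i ≤ pos b
        · rw [if_pos hb] at hba ⊢
          rw [if_pos (by linarith)]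
          linarith
        · have hac : ¬ lo i ≤ pos a := by intro h; exact hb (by linarith)
          rw [if_neg hb, if_neg hac] at hba
          linarith
      · by_cases hb : lo i ≤ pos b
        · rw [if_pos hb] at hba ⊢
          rw [if_pos (by linarith)] at hba
          linarith
        · have hcc : ¬ lo i ≤ pos c := by intro h; exact hb (by linarith)
          rw [if_neg hb, if_neg hcc]
          linarith
  · rintro ⟨rank, pos, hpos, hinj, href, hsp⟩
    refine ⟨pos, hpos, fun i => ?_⟩
    by_cases hne : (P i).Nonempty
    · obtain ⟨a, haP, hamin⟩ := Finset.exists_min_image (P i) pos hne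
      obtain ⟨b, hbP, hbmax⟩ := Finset.exists_max_image (P i) pos hne
      refine ⟨pos a, pos b, fun c => ⟨fun hc => ⟨hamin c hc, hbmax c hc⟩, ?_⟩⟩
      rintro ⟨h1, h2⟩
      by_contra hc
      have hca : pos a ≠ pos c := fun h => hc (hpos h ▸ haP)
      have hcb : pos c ≠ pos b := fun h => hc (hpos h ▸ hbP)
      have h1' : pos a < pos c := lt_of_le_of_ne h1 hca
      have h2' : pos c < pos b := lt_of_le_of_ne h2 hcb
      have hra : rank i c < rank i a := href i a c haP hc
      have hrb : rank i c < rank i b := href i b c hbP hc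
      have := hsp i a c b (Or.inl ⟨h1', h2'⟩) hra
      linarith
    · exact ⟨1, 0, fun c => ⟨fun hc => absurd ⟨c, hc⟩ hne, fun ⟨h1, h2⟩ => by linarith⟩⟩
end

section
/- A dichotomous profile P satisfies CI if and only if P satisfies DE: there exists a mapping ρ of voters and candidates into the real line and radii r_1,...,r_n ≥ 0 such that v_i = { c : |ρ(i) − ρ(c)| ≤ r_i } for every voter i. -/
open Finset Function

variable {C : Type*} [Fintype C] [DecidableEq C]

theorem stmt12 {C : Type*} [Fintype C] [DecidableEq C] {n : ℕ}
    (P : Fin n → Finset C) : CI P ↔ DE P := by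
  classical
  constructor
  · rintro ⟨pos, hinj, h⟩
    choose lo hi h using h
    obtain ⟨x, hx⟩ : ∃ x : ℝ, ∀ c : C, pos c ≠ x := by
      obtain ⟨x, hx⟩ := (Set.finite_range pos).infinite_compl.nonempty
      exact ⟨x, fun c hc => hx ⟨c, hc⟩⟩
    refine ⟨fun i => if lo i ≤ hi i then (lo i + hi i) / 2 else x, pos,
      fun i => if lo i ≤ hi i then (hi i - lo i) / 2 else 0, fun i => ?_, fun i c => ?_⟩
    · dsimp only
      split
      · next hle => linarith
      · exact le_refl 0
    · by_cases hle : lo i ≤ hi i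
      · simp only [if_pos hle, h i c, abs_le]
        constructor
        · rintro ⟨h1, h2⟩; constructor <;> linarith
        · rintro ⟨h1, h2⟩; constructor <;> linarith
      · simp only [if_neg hle, h i c]
        constructor
        · rintro ⟨h1, h2⟩; exact absurd (le_trans h1 h2) hle
        · intro habs
          obtain ⟨h1, h2⟩ := abs_le.mp habs
          exact absurd (by linarith : pos c = x) (hx c)
  · rintro ⟨ρv, ρc, r, hr, hP⟩
    set e := Fintype.equivFin C with he
    set key : C → C → Prop :=
      fun a b => ρc a < ρc b ∨ (ρc a = ρc b ∧ e a < e b) with hkey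
    have ktrans : ∀ {a b c : C}, key a b → key b c → key a c := by
      rintro a b c (h1 | ⟨h1, h1'⟩) (h2 | ⟨h2, h2'⟩)
      · exact Or.inl (h1.trans h2)
      · exact Or.inl (h2 ▸ h1)
      · exact Or.inl (h1 ▸ h2)
      · exact Or.inr ⟨h1.trans h2, h1'.trans h2'⟩
    have kirr : ∀ a : C, ¬ key a a := by
      rintro a (h | ⟨-, h⟩) <;> exact lt_irrefl _ h
    set pos : C → ℝ :=
      fun c => ((Finset.univ.filter (fun c' => key c' c)).card : ℝ) with hposdef
    have mono : ∀ a b : C, key a b → pos a < pos b := by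
      intro a b hab
      have hsub : Finset.univ.filter (fun c' => key c' a) ⊂
          Finset.univ.filter (fun c' => key c' b) := by
        constructor
        · intro c hc
          simp only [Finset.mem_filter, Finset.mem_univ, true_and] at hc ⊢
          exact ktrans hc hab
        · intro hsub'
          have hb : a ∈ Finset.univ.filter (fun c' => key c' b) := by
            simp only [Finset.mem_filter, Finset.mem_univ, true_and]; exact hab
          have := hsub' hb
          simp only [Finset.mem_filter, Finset.mem_univ, true_and] at this
          exact kirr a this
      have := Finset.card_lt_card hsub
      simp only [hposdef]
      exact_mod_cast this
    have ktrich : ∀ a b : C, a ≠ b → key a b ∨ key b a := by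
      intro a b hab
      rcases lt_trichotomy (ρc a) (ρc b) with h | h | h
      · exact Or.inl (Or.inl h)
      · rcases lt_or_gt_of_ne (fun hee => hab (e.injective hee)) with h' | h'
        · exact Or.inl (Or.inr ⟨h, h'⟩)
        · exact Or.inr (Or.inr ⟨h.symm, h'⟩)
      · exact Or.inr (Or.inl h)
    have posinj : Injective pos := by
      intro a b hab
      by_contra hne
      rcases ktrich a b hne with h | h
      · exact absurd hab (ne_of_lt (mono a b h))
      · exact absurd hab.symm (ne_of_lt (mono b a h))
    have posle : ∀ a b : C, pos a ≤ pos b → ρc a ≤ ρc b := by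
      intro a b hab
      by_contra h
      push_neg at h
      exact absurd hab (not_le.mpr (mono b a (Or.inl h)))
    refine ⟨pos, posinj, fun i => ?_⟩
    by_cases hne : (P i).Nonempty
    · obtain ⟨a, ha, hamin⟩ := Finset.exists_min_image (P i) pos hne
      obtain ⟨b, hb, hbmax⟩ := Finset.exists_max_image (P i) pos hne
      refine ⟨pos a, pos b, fun c => ?_⟩
      constructor
      · intro hc; exact ⟨hamin c hc, hbmax c hc⟩
      · rintro ⟨h1, h2⟩
        have hca : ρc a ≤ ρc c := posle a c h1
        have hcb : ρc c ≤ ρc b := posle c b h2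
        obtain ⟨ha1, ha2⟩ := abs_le.mp ((hP i a).mp ha)
        obtain ⟨hb1, hb2⟩ := abs_le.mp ((hP i b).mp hb)
        exact (hP i c).mpr (abs_le.mpr ⟨by linarith, by linarith⟩)
    · refine ⟨1, 0, fun c => ?_⟩
      constructor
      · intro hc; exact absurd ⟨c, hc⟩ hne
      · rintro ⟨h1, h2⟩; linarith
end

section
/- If a dichotomous profile P satisfies VI, then P satisfies SSC: voters can be ordered so that for each pair of candidates a, b, either all votes containing a but not b precede all votes containing b but not a, or vice versa. -/
open Finset Function

variable {C : Type*} [Fintype C] [DecidableEq C]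

theorem stmt13 {C : Type*} [Fintype C] [DecidableEq C] {n : ℕ}
    (P : Fin n → Finset C) (h : VI P) : SSC P := by
  obtain ⟨σ, hinj, hint⟩ := h
  refine ⟨σ, hinj, fun a b => ?_⟩
  obtain ⟨la, ha, hA⟩ := hint a
  obtain ⟨lb, hb, hB⟩ := hint b
  by_cases hcase : ∀ i j, (a ∈ P i ∧ b ∉ P i) → (b ∈ P j ∧ a ∉ P j) → σ i < σ j
  · exact Or.inl hcase
  · push_neg at hcase
    obtain ⟨i, j, hi, hj, hle⟩ := hcase
    have hiA := (hA i).mp hi.1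
    have hjB := (hB j).mp hj.1
    have hiB : ¬ (lb ≤ σ i ∧ σ i ≤ hb) := fun hx => hi.2 ((hB i).mpr hx)
    have hib : hb < σ i := by
      by_contra hcon
      exact hiB ⟨le_trans hjB.1 hle, le_of_not_gt hcon⟩
    refine Or.inr fun j' i' hj' hi' => ?_
    have hi'A := (hA i').mp hi'.1
    have hj'B := (hB j').mp hj'.1
    have hi'B : ¬ (lb ≤ σ i' ∧ σ i' ≤ hb) := fun hx => hi'.2 ((hB i').mpr hx)
    have hj'A : ¬ (la ≤ σ j' ∧ σ j' ≤ ha) := fun hx => hj'.2 ((hA j').mpr hx)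
    by_contra hcon
    push_neg at hcon
    have h1 : σ i' < lb := by
      by_contra h2
      exact hi'B ⟨le_of_not_gt h2, le_trans hcon hj'B.2⟩
    exact hj'A ⟨by linarith [hi'A.1], by linarith [hiA.2]⟩
end

section
/- Suppose a dichotomous profile P with pairwise distinct votes satisfies VEI with respect to a voter ordering ⊑. Then ⊑ and its reverse are the only voter orderings witnessing VEI for P (VEI orderings are unique up to reversal). -/
open Finset Function

variable {C : Type*} [Fintype C] [DecidableEq C]

section AuxVEI

variable {n : ℕ}

/-- Set-theoretic betweenness induced by the profile. -/
def Btw3 (P : Fin n → Finset C) (i j k : Fin n) : Prop :=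
  ∀ c : C, (c ∈ P i → c ∈ P k → c ∈ P j) ∧ (c ∉ P i → c ∉ P k → c ∉ P j)

lemma btw3_comm {P : Fin n → Finset C} {i j k : Fin n} (h : Btw3 P i j k) :
    Btw3 P k j i :=
  fun c => ⟨fun hk hi => (h c).1 hi hk, fun hk hi => (h c).2 hi hk⟩

lemma vei_neg {P : Fin n → Finset C} {σ : Fin n → ℝ} (h : IsVEIOrder P σ) :
    IsVEIOrder P (fun i => -σ i) := by
  intro c
  rcases h c with ⟨t, ht⟩ | ⟨t, ht⟩
  · exact Or.inr ⟨-t, fun i => by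
      rw [ht]; show σ i ≤ t ↔ -t ≤ -σ i; constructor <;> intro <;> linarith⟩
  · exact Or.inl ⟨-t, fun i => by
      rw [ht]; show t ≤ σ i ↔ -σ i ≤ -t; constructor <;> intro <;> linarith⟩

lemma sep_cand {P : Fin n → Finset C} (hP : Function.Injective P) {i j : Fin n}
    (hij : i ≠ j) : ∃ c, (c ∈ P i ∧ c ∉ P j) ∨ (c ∈ P j ∧ c ∉ P i) := by
  by_contra hc
  push_neg at hc
  exact hij (hP (Finset.ext fun c => ⟨(hc c).1, (hc c).2⟩))

lemma btw_mid {P : Fin n → Finset C} {σ : Fin n → ℝ} (hV : IsVEIOrder P σ)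
    {i j k : Fin n} (h1 : σ i < σ j) (h2 : σ j < σ k) : Btw3 P i j k := by
  intro c
  rcases hV c with ⟨t, ht⟩ | ⟨t, ht⟩
  · simp only [ht]
    exact ⟨fun _ hk => le_of_lt (lt_of_lt_of_le h2 hk),
      fun hi _ hj => hi ((le_of_lt h1).trans hj)⟩
  · simp only [ht]
    exact ⟨fun hi _ => hi.trans (le_of_lt h1),
      fun _ hk hj => hk (hj.trans (le_of_lt h2))⟩

/-- If `j` is strictly below the other two, `j` is not between `i` and `k`. -/
lemma not_btw_low {P : Fin n → Finset C} (hP : Function.Injective P)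
    {σ : Fin n → ℝ} (hV : IsVEIOrder P σ) {i j k : Fin n}
    (h1 : σ j < σ i) (h2 : σ i < σ k) : ¬ Btw3 P i j k := by
  intro hb
  have hij : i ≠ j := fun h => by subst h; exact lt_irrefl _ h1
  obtain ⟨c, hc⟩ := sep_cand hP hij
  rcases hc with ⟨hci, hcj⟩ | ⟨hcj, hci⟩
  · rcases hV c with ⟨t, ht⟩ | ⟨t, ht⟩
    · exact hcj ((ht j).mpr (le_of_lt (lt_of_lt_of_le h1 ((ht i).mp hci))))
    · have hck : c ∈ P k := (ht k).mpr (((ht i).mp hci).trans (le_of_lt h2))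
      exact hcj ((hb c).1 hci hck)
  · rcases hV c with ⟨t, ht⟩ | ⟨t, ht⟩
    · have hck : c ∉ P k := fun h => hci ((ht i).mpr ((le_of_lt h2).trans ((ht k).mp h)))
      exact ((hb c).2 hci hck) hcj
    · exact hci ((ht i).mpr (((ht j).mp hcj).trans (le_of_lt h1)))

/-- Betweenness transfers between VEI orders. -/
lemma bpres {P : Fin n → Finset C} (hP : Function.Injective P)
    {σ σ' : Fin n → ℝ} (hσ' : Function.Injective σ')
    (hV : IsVEIOrder P σ) (hV' : IsVEIOrder P σ') {i j k : Fin n}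
    (h1 : σ i < σ j) (h2 : σ j < σ k) :
    (σ' i < σ' j ∧ σ' j < σ' k) ∨ (σ' k < σ' j ∧ σ' j < σ' i) := by
  have hb := btw_mid hV h1 h2
  have hij : i ≠ j := fun h => by subst h; exact lt_irrefl _ h1
  have hjk : j ≠ k := fun h => by subst h; exact lt_irrefl _ h2
  have hik : i ≠ k := fun h => by subst h; exact lt_irrefl _ (h1.trans h2)
  have hVn := vei_neg hV'
  rcases lt_trichotomy (σ' i) (σ' j) with h3 | h3 | h3
  · rcases lt_trichotomy (σ' j) (σ' k) with h4 | h4 | h4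
    · exact Or.inl ⟨h3, h4⟩
    · exact absurd (hσ' h4) hjk
    · -- σ' i < σ' j and σ' k < σ' j : j is on top
      rcases lt_trichotomy (σ' i) (σ' k) with h5 | h5 | h5
      · -- i < k < j : use negated order, triple (k, j, i)
        exact absurd (btw3_comm hb)
          (not_btw_low hP hVn (by simpa using neg_lt_neg h4) (by simpa using neg_lt_neg h5))
      · exact absurd (hσ' h5) hik
      · -- k < i < j
        exact absurd hb
          (not_btw_low hP hVn (by simpa using neg_lt_neg h3) (by simpa using neg_lt_neg h5))
  · exact absurd (hσ' h3) hij
  · rcases lt_trichotomy (σ' j) (σ' k) with h4 | h4 | h4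
    · -- σ' j < σ' i and σ' j < σ' k : j at the bottom
      rcases lt_trichotomy (σ' i) (σ' k) with h5 | h5 | h5
      · exact absurd hb (not_btw_low hP hV' h3 h5)
      · exact absurd (hσ' h5) hik
      · exact absurd (btw3_comm hb) (not_btw_low hP hV' h4 h5)
    · exact absurd (hσ' h4) hjk
    · exact Or.inr ⟨h4, h3⟩

lemma cmp_dir {P : Fin n → Finset C} (hP : Function.Injective P)
    {σ σ' : Fin n → ℝ} (hσ : Function.Injective σ) (hσ' : Function.Injective σ')
    (hV : IsVEIOrder P σ) (hV' : IsVEIOrder P σ') {a b : Fin n}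
    (hab : σ a < σ b) (hab' : σ' a < σ' b) {x : Fin n} (hx : σ a < σ x) :
    σ' a < σ' x := by
  rcases lt_trichotomy (σ x) (σ b) with h | h | h
  · rcases bpres hP hσ' hV hV' hx h with ⟨h1, _⟩ | ⟨_, h2⟩
    · exact h1
    · linarith
  · have : x = b := hσ h
    subst this; exact hab'
  · rcases bpres hP hσ' hV hV' hab h with ⟨h1, h2⟩ | ⟨h1, h2⟩
    · exact h1.trans h2
    · linarith

lemma lt_dir {P : Fin n → Finset C} (hP : Function.Injective P)
    {σ σ' : Fin n → ℝ} (hσ : Function.Injective σ) (hσ' : Function.Injective σ')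
    (hV : IsVEIOrder P σ) (hV' : IsVEIOrder P σ') {a b : Fin n}
    (hab : σ a < σ b) (hab' : σ' a < σ' b) :
    ∀ {x y : Fin n}, σ x < σ y → σ' x < σ' y := by
  have gtA : ∀ u : Fin n, σ u < σ a → σ' u < σ' a := by
    intro u hu
    rcases lt_trichotomy (σ' u) (σ' a) with h | h | h
    · exact h
    · exact absurd (hσ' h) (fun e => by subst e; exact lt_irrefl _ hu)
    · exact absurd (cmp_dir hP hσ' hσ hV' hV hab' hab h) (not_lt.mpr hu.le)
  intro x y hxy
  by_cases hxa : x = a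
  · subst hxa; exact cmp_dir hP hσ hσ' hV hV' hab hab' hxy
  by_cases hya : y = a
  · subst hya; exact gtA x hxy
  rcases lt_trichotomy (σ a) (σ x) with h | h | h
  · rcases bpres hP hσ' hV hV' h hxy with ⟨_, h2⟩ | ⟨_, h2⟩
    · exact h2
    · exact absurd (cmp_dir hP hσ hσ' hV hV' hab hab' h) (not_lt.mpr h2.le)
  · exact absurd (hσ h).symm hxa
  · rcases lt_trichotomy (σ y) (σ a) with h4 | h4 | h4
    · rcases bpres hP hσ' hV hV' hxy h4 with ⟨h1, _⟩ | ⟨h1, _⟩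
      · exact h1
      · exact absurd (gtA y h4) (not_lt.mpr h1.le)
    · exact absurd (hσ h4) hya
    · exact (gtA x h).trans (cmp_dir hP hσ hσ' hV hV' hab hab' h4)

end AuxVEI

theorem stmt15 {C : Type*} [Fintype C] [DecidableEq C] {n : ℕ}
    (P : Fin n → Finset C) (hP : Function.Injective P)
    (σ : Fin n → ℝ) (hσ : Function.Injective σ) (hVEI : IsVEIOrder P σ) :
    ∀ σ' : Fin n → ℝ, Function.Injective σ' → IsVEIOrder P σ' →
      ((∀ i j, σ i ≤ σ j ↔ σ' i ≤ σ' j) ∨ (∀ i j, σ i ≤ σ j ↔ σ' j ≤ σ' i)) := by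
  intro σ' hσ' hV'
  by_cases hex : ∃ a b : Fin n, σ a < σ b
  · obtain ⟨a, b, hab⟩ := hex
    have hne : a ≠ b := fun h => by subst h; exact lt_irrefl _ hab
    rcases lt_or_gt_of_ne (hσ'.ne hne) with hab' | hab'
    · left
      intro i j
      constructor
      · intro h
        by_contra h'
        push_neg at h'
        exact absurd (lt_dir hP hσ' hσ hV' hVEI hab' hab h') (not_lt.mpr h)
      · intro h
        by_contra h'
        push_neg at h'
        exact absurd (lt_dir hP hσ hσ' hVEI hV' hab hab' h') (not_lt.mpr h)
    · right
      have hτ : Function.Injective (fun i => -σ' i) := fun i j h => by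
        simp only [neg_inj] at h; exact hσ' h
      have hVτ : IsVEIOrder P (fun i => -σ' i) := vei_neg hV'
      have habτ : (fun i => -σ' i) a < (fun i => -σ' i) b := by
        simp only []; linarith
      intro i j
      constructor
      · intro h
        by_contra h'
        push_neg at h'
        have h'' : (fun i => -σ' i) j < (fun i => -σ' i) i := by simp only []; linarith
        exact absurd (lt_dir hP hτ hσ hVτ hVEI habτ hab h'') (not_lt.mpr h)
      · intro h
        by_contra h'
        push_neg at h'
        have := lt_dir hP hσ hτ hVEI hVτ hab habτ h'
        exact absurd h (not_le.mpr (by linarith))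
  · left
    push_neg at hex
    intro i j
    have hij : i = j := hσ (le_antisymm (hex j i) (hex i j))
    subst hij
    simp
end

section
/- Suppose in a dichotomous profile P all candidates are approved by pairwise distinct sets of voters, and P satisfies CEI with respect to a candidate ordering ⊲. Then ⊲ and its reverse are the only candidate orderings witnessing CEI for P. -/
open Finset Function

variable {C : Type*} [Fintype C] [DecidableEq C]

section AuxStmt16

variable {n : ℕ}

/-- Profile-derived betweenness: `b` lies between `a` and `c`. -/
def MidP (P : Fin n → Finset C) (a b c : C) : Prop :=
  ∀ i, ((a ∈ P i ∧ c ∈ P i) → b ∈ P i) ∧ (b ∈ P i → a ∈ P i ∨ c ∈ P i)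

lemma midP_symm {P : Fin n → Finset C} {a b c : C} (h : MidP P a b c) : MidP P c b a := by
  intro i
  obtain ⟨h1, h2⟩ := h i
  exact ⟨fun ⟨x, y⟩ => h1 ⟨y, x⟩, fun hb => (h2 hb).symm⟩

lemma midP_of_between {P : Fin n → Finset C} {pos : C → ℝ} (hCEI : IsCEIOrder P pos)
    {a b c : C} (hab : pos a < pos b) (hbc : pos b < pos c) : MidP P a b c := by
  intro i
  rcases hCEI i with ⟨t, ht⟩ | ⟨t, ht⟩
  · refine ⟨fun ⟨_, hc⟩ => ?_, fun hb => Or.inl ?_⟩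
    · rw [ht] at hc ⊢; linarith
    · rw [ht] at hb ⊢; linarith
  · refine ⟨fun ⟨ha, _⟩ => ?_, fun hb => Or.inr ?_⟩
    · rw [ht] at ha ⊢; linarith
    · rw [ht] at hb ⊢; linarith

lemma sep_stmt16 {P : Fin n → Finset C}
    (hdist : ∀ c c' : C, (∀ i, c ∈ P i ↔ c' ∈ P i) → c = c') {a b : C} (hne : a ≠ b) :
    ∃ i, (a ∈ P i ∧ b ∉ P i) ∨ (b ∈ P i ∧ a ∉ P i) := by
  by_contra h
  push_neg at h
  apply hne
  apply hdist
  intro i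
  have := h i
  by_cases ha : a ∈ P i <;> by_cases hb : b ∈ P i <;> tauto

/-- If the true order is `a ⊲ b ⊲ c`, then `a` is not between `b` and `c`. -/
lemma not_midP_left {P : Fin n → Finset C}
    (hdist : ∀ c c' : C, (∀ i, c ∈ P i ↔ c' ∈ P i) → c = c')
    {pos : C → ℝ} (hCEI : IsCEIOrder P pos)
    {a b c : C} (hab : pos a < pos b) (hbc : pos b < pos c) : ¬ MidP P b a c := by
  intro hM
  have hne : a ≠ b := fun h => by rw [h] at hab; exact lt_irrefl _ hab
  obtain ⟨i, hi⟩ := sep_stmt16 hdist hne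
  obtain ⟨h1, h2⟩ := hM i
  rcases hCEI i with ⟨t, ht⟩ | ⟨t, ht⟩
  · rcases hi with ⟨ha, hb⟩ | ⟨hb, ha⟩
    · have hc : c ∉ P i := by rw [ht] at hb ⊢; intro h; exact hb (by linarith)
      rcases h2 ha with h | h
      · exact hb h
      · exact hc h
    · exact ha (by rw [ht] at hb ⊢; linarith)
  · rcases hi with ⟨ha, hb⟩ | ⟨hb, ha⟩
    · exact hb (by rw [ht] at ha ⊢; linarith)
    · have hc : c ∈ P i := by rw [ht] at hb ⊢; linarith
      exact ha (h1 ⟨hb, hc⟩)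

/-- If the true order is `a ⊲ b ⊲ c`, then `c` is not between `a` and `b`. -/
lemma not_midP_right {P : Fin n → Finset C}
    (hdist : ∀ c c' : C, (∀ i, c ∈ P i ↔ c' ∈ P i) → c = c')
    {pos : C → ℝ} (hCEI : IsCEIOrder P pos)
    {a b c : C} (hab : pos a < pos b) (hbc : pos b < pos c) : ¬ MidP P a c b := by
  intro hM
  have hne : b ≠ c := fun h => by rw [h] at hbc; exact lt_irrefl _ hbc
  obtain ⟨i, hi⟩ := sep_stmt16 hdist hne
  obtain ⟨h1, h2⟩ := hM i
  rcases hCEI i with ⟨t, ht⟩ | ⟨t, ht⟩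
  · rcases hi with ⟨hb, hc⟩ | ⟨hc, hb⟩
    · have ha : a ∈ P i := by rw [ht] at hb ⊢; linarith
      exact hc (h1 ⟨ha, hb⟩)
    · exact hb (by rw [ht] at hc ⊢; linarith)
  · rcases hi with ⟨hb, hc⟩ | ⟨hc, hb⟩
    · exact hc (by rw [ht] at hb ⊢; linarith)
    · have ha : a ∉ P i := by rw [ht] at hb ⊢; intro h; exact hb (by linarith)
      rcases h2 hc with h | h
      · exact ha h
      · exact hb h

lemma midP_iff {P : Fin n → Finset C}
    (hdist : ∀ c c' : C, (∀ i, c ∈ P i ↔ c' ∈ P i) → c = c')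
    {pos : C → ℝ} (hpos : Function.Injective pos) (hCEI : IsCEIOrder P pos)
    {a b c : C} (hab : a ≠ b) (hbc : b ≠ c) (hac : a ≠ c) :
    MidP P a b c ↔ (pos a < pos b ∧ pos b < pos c) ∨ (pos c < pos b ∧ pos b < pos a) := by
  constructor
  · intro hM
    rcases lt_trichotomy (pos a) (pos b) with h1 | h1 | h1
    · rcases lt_trichotomy (pos b) (pos c) with h2 | h2 | h2
      · exact Or.inl ⟨h1, h2⟩
      · exact absurd (hpos h2) hbc
      · rcases lt_trichotomy (pos a) (pos c) with h3 | h3 | h3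
        · exact absurd hM (not_midP_right hdist hCEI h3 h2)
        · exact absurd (hpos h3) hac
        · exact absurd (midP_symm hM) (not_midP_right hdist hCEI h3 h1)
    · exact absurd (hpos h1) hab
    · rcases lt_trichotomy (pos b) (pos c) with h2 | h2 | h2
      · rcases lt_trichotomy (pos a) (pos c) with h3 | h3 | h3
        · exact absurd hM (not_midP_left hdist hCEI h1 h3)
        · exact absurd (hpos h3) hac
        · exact absurd (midP_symm hM) (not_midP_left hdist hCEI h2 h3)
      · exact absurd (hpos h2) hbc
      · exact Or.inr ⟨h2, h1⟩
  · rintro (⟨h1, h2⟩ | ⟨h1, h2⟩)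
    · exact midP_of_between hCEI h1 h2
    · exact midP_symm (midP_of_between hCEI h1 h2)

/-- Two injections with the same strict betweenness, agreeing on one pair,
are comonotone. -/
lemma order_of_between {f g : C → ℝ} (hf : Function.Injective f)
    (H : ∀ x y z : C, x ≠ y → y ≠ z → x ≠ z →
      (((f x < f y ∧ f y < f z) ∨ (f z < f y ∧ f y < f x)) ↔
       ((g x < g y ∧ g y < g z) ∨ (g z < g y ∧ g y < g x))))
    {a b : C} (hab : f a < f b) (gab : g a < g b) :
    ∀ c d : C, f c < f d → g c < g d := by
  have hne : a ≠ b := fun h => by rw [h] at hab; exact lt_irrefl _ hab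
  have L0 : ∀ c : C, c ≠ a → c ≠ b →
      ((f c < f a → g c < g a) ∧ (f a < f c → g a < g c) ∧
       (f c < f b → g c < g b) ∧ (f b < f c → g b < g c)) := by
    intro c hca hcb
    rcases lt_trichotomy (f c) (f a) with h1 | h1 | h1
    · have := (H c a b hca hne (hcb)).mp (Or.inl ⟨h1, hab⟩)
      rcases this with ⟨g1, g2⟩ | ⟨g1, g2⟩
      · exact ⟨fun _ => g1, fun h => absurd h (by linarith),
          fun _ => by linarith, fun h => absurd h (by linarith)⟩
      · linarith
    · exact absurd (hf h1) hca
    · rcases lt_trichotomy (f c) (f b) with h2 | h2 | h2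
      · have := (H a c b (Ne.symm hca) hcb hne).mp (Or.inl ⟨h1, h2⟩)
        rcases this with ⟨g1, g2⟩ | ⟨g1, g2⟩
        · exact ⟨fun h => absurd h (by linarith), fun _ => g1,
            fun _ => g2, fun h => absurd h (by linarith)⟩
        · linarith
      · exact absurd (hf h2) hcb
      · have := (H a b c hne (Ne.symm hcb) (Ne.symm hca)).mp (Or.inl ⟨hab, h2⟩)
        rcases this with ⟨g1, g2⟩ | ⟨g1, g2⟩
        · exact ⟨fun h => absurd h (by linarith), fun _ => by linarith,
            fun h => absurd h (by linarith), fun _ => g2⟩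
        · linarith
  intro c d hcd
  have hcdne : c ≠ d := fun h => by rw [h] at hcd; exact lt_irrefl _ hcd
  by_cases hca : c = a
  · subst hca
    by_cases hdb : d = b
    · subst hdb; exact gab
    · exact ((L0 d (Ne.symm hcdne) hdb).2.1) hcd
  · by_cases hcb : c = b
    · have hdb : d ≠ b := fun h => hcdne (hcb.trans h.symm)
      rw [hcb] at hcd
      have hda : d ≠ a := fun h => by rw [h] at hcd; linarith
      rw [hcb]
      exact ((L0 d hda hdb).2.2.2) hcd
    · by_cases hda : d = a
      · subst hda; exact ((L0 c hcdne hcb).1) hcd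
      · by_cases hdb : d = b
        · subst hdb; exact ((L0 c hca hcdne).2.2.1) hcd
        · rcases lt_trichotomy (f c) (f a) with h1 | h1 | h1
          · rcases lt_trichotomy (f d) (f a) with h2 | h2 | h2
            · have := (H c d a hcdne hda hca).mp (Or.inl ⟨hcd, h2⟩)
              rcases this with ⟨g1, g2⟩ | ⟨g1, g2⟩
              · exact g1
              · have := ((L0 d hda hdb).1) h2; linarith
            · exact absurd (hf h2) hda
            · have gca := ((L0 c hca hcb).1) h1
              have gad := ((L0 d hda hdb).2.1) h2
              linarith
          · exact absurd (hf h1) hca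
          · have := (H a c d (Ne.symm hca) hcdne (Ne.symm hda)).mp (Or.inl ⟨h1, hcd⟩)
            rcases this with ⟨g1, g2⟩ | ⟨g1, g2⟩
            · exact g2
            · have := ((L0 c hca hcb).2.1) h1; linarith

end AuxStmt16

theorem stmt16 {C : Type*} [Fintype C] [DecidableEq C] {n : ℕ}
    (P : Fin n → Finset C)
    (hdist : ∀ c c' : C, (∀ i, c ∈ P i ↔ c' ∈ P i) → c = c')
    (pos : C → ℝ) (hpos : Function.Injective pos) (hCEI : IsCEIOrder P pos) :
    ∀ pos' : C → ℝ, Function.Injective pos' → IsCEIOrder P pos' →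
      ((∀ c d : C, pos c ≤ pos d ↔ pos' c ≤ pos' d) ∨
       (∀ c d : C, pos c ≤ pos d ↔ pos' d ≤ pos' c)) := by
  intro pos' hpos' hCEI'
  have H : ∀ x y z : C, x ≠ y → y ≠ z → x ≠ z →
      (((pos x < pos y ∧ pos y < pos z) ∨ (pos z < pos y ∧ pos y < pos x)) ↔
       ((pos' x < pos' y ∧ pos' y < pos' z) ∨ (pos' z < pos' y ∧ pos' y < pos' x))) :=
    fun x y z hxy hyz hxz =>
      (midP_iff hdist hpos hCEI hxy hyz hxz).symm.trans
        (midP_iff hdist hpos' hCEI' hxy hyz hxz)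
  by_cases hpair : ∃ a b : C, pos a < pos b
  · obtain ⟨a, b, hab⟩ := hpair
    rcases lt_trichotomy (pos' a) (pos' b) with gab | gab | gab
    · left
      have mono := order_of_between hpos H hab gab
      intro c d
      constructor
      · intro h
        rcases lt_or_eq_of_le h with h | h
        · exact le_of_lt (mono c d h)
        · rw [hpos h]
      · intro h
        by_contra hle
        push_neg at hle
        have := mono d c hle
        linarith
    · exact absurd (hpos' gab) (fun h => by rw [h] at hab; exact lt_irrefl _ hab)
    · right
      have H' : ∀ x y z : C, x ≠ y → y ≠ z → x ≠ z →
          (((pos x < pos y ∧ pos y < pos z) ∨ (pos z < pos y ∧ pos y < pos x)) ↔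
           (((fun x => -pos' x) x < (fun x => -pos' x) y ∧
             (fun x => -pos' x) y < (fun x => -pos' x) z) ∨
            ((fun x => -pos' x) z < (fun x => -pos' x) y ∧
             (fun x => -pos' x) y < (fun x => -pos' x) x))) := by
        intro x y z hxy hyz hxz
        rw [H x y z hxy hyz hxz]
        dsimp only
        constructor
        · rintro (⟨h1, h2⟩ | ⟨h1, h2⟩)
          · right; constructor <;> linarith
          · left; constructor <;> linarith
        · rintro (⟨h1, h2⟩ | ⟨h1, h2⟩)
          · right; constructor <;> linarith
          · left; constructor <;> linarith
      have gab' : (fun x => -pos' x) a < (fun x => -pos' x) b := by dsimp only; linarith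
      have mono := order_of_between hpos H' hab gab'
      intro c d
      constructor
      · intro h
        rcases lt_or_eq_of_le h with h | h
        · have := mono c d h
          linarith
        · rw [hpos h]
      · intro h
        by_contra hle
        push_neg at hle
        have := mono d c hle
        linarith
  · push_neg at hpair
    left
    intro c d
    have : c = d := hpos (le_antisymm (hpair d c) (hpair c d))
    subst this
    simp
end
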